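/- For t > 0 set C_0(t) := c_0^t and C_k(t) := (c_0+⋯+c_k)^t − (c_0+⋯+c_{k−1})^t for k ≥ 1, and define μ_t := Σ_{k≥0} C_k(t) m_k pointwise. Then: (i) for every t > 0, C_k(t) > 0 for all k and Σ_{x∈G} μ_t(x) = 1, so μ_t is a strictly positive probability density on G; (ii) μ_s * μ_t = μ_{s+t} for all s, t > 0; (iii) μ_1 = μ. In particular μ is infinitely divisible: μ = (μ_{1/n})^{*n} for every n ≥ 1, so μ embeds into a convolution semigroup (μ_t)_{t>0}. -/

import Mathlib

open scoped BigOperators Classical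

/-- Convolution of two real-valued functions on a group:
`(f * g)(x) = ∑_y f(y) g(y⁻¹ x)`. -/
noncomputable def gconv {G : Type*} [Group G] (f g : G → ℝ) : G → ℝ :=
  fun x => ∑' y : G, f y * g (y⁻¹ * x)

/-- `n`-fold convolution power, with `f^{*0} = δ_e` and `f^{*(n+1)} = f * f^{*n}`
(so `f^{*1} = f`). -/
noncomputable def gconvPow {G : Type*} [Group G] (f : G → ℝ) : ℕ → G → ℝ
  | 0 => fun x => if x = 1 then 1 else 0
  | n + 1 => gconv f (gconvPow f n)

/-!
`μ_t = ∑ₖ C_k(t) m_k` averages `m_K` over a random index `K` with distribution function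
`P(K ≤ k) = S_k^t`, where `S_k = c_0 + ⋯ + c_k`. For a chain of finite subgroups
`m_j * m_k = m_{max j k}`, so `μ_s * μ_t` averages `m_{max K K'}` over independent `K, K'`, and
`max K K'` has distribution function `S_k^s S_k^t = S_k^{s+t}`: this is `μ_{s+t}`.
-/

open Finset Filter Topology

theorem hasSum_of_hasSum_rows_of_nonneg {α β : Type*} {F : α → β → ℝ} (hF : ∀ a b, 0 ≤ F a b)
    {r : α → ℝ} {q : β → ℝ} {s : ℝ} (hrow : ∀ a, HasSum (F a) (r a)) (hr : HasSum r s)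
    (hcol : ∀ b, HasSum (fun a => F a b) (q b)) : HasSum q s := by
  have hsum : Summable (Function.uncurry F) :=
    (summable_prod_of_nonneg fun p => hF p.1 p.2).mpr
      ⟨fun a => (hrow a).summable, hr.summable.congr fun a => (hrow a).tsum_eq.symm⟩
  have htot : HasSum (Function.uncurry F) s := by
    rw [hr.unique (hsum.hasSum.prod_fiberwise hrow)]
    exact hsum.hasSum
  exact ((Equiv.prodComm β α).hasSum_iff.mpr htot).prod_fiberwise hcol

section UniformDensity

variable {G : Type*} [Group G]

noncomputable def uniformDensity (H : Subgroup G) (x : G) : ℝ :=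
  if x ∈ H then (Nat.card H : ℝ)⁻¹ else 0

theorem uniformDensity_nonneg (H : Subgroup G) (x : G) : 0 ≤ uniformDensity H x := by
  unfold uniformDensity
  split_ifs <;> positivity

theorem uniformDensity_le_one (H : Subgroup G) (x : G) : uniformDensity H x ≤ 1 := by
  unfold uniformDensity
  split_ifs
  exacts [Nat.cast_inv_le_one _, zero_le_one]

theorem uniformDensity_pos {H : Subgroup G} (hH : (H : Set G).Finite) {x : G} (hx : x ∈ H) :
    0 < uniformDensity H x := by
  have : Finite H := hH.to_subtype
  simp [uniformDensity, hx, Nat.card_pos]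

theorem hasSum_uniformDensity {H : Subgroup G} (hH : (H : Set G).Finite) :
    HasSum (uniformDensity H) 1 := by
  have hcard : Nat.card H = hH.toFinset.card := Nat.card_eq_card_finite_toFinset hH
  have hpos : 0 < Nat.card H := hcard ▸ (hH.toFinset_nonempty.mpr ⟨1, H.one_mem⟩).card_pos
  have hconst : ∀ x ∈ hH.toFinset, uniformDensity H x = (Nat.card H : ℝ)⁻¹ :=
    fun x hx => if_pos (by simpa using hx)
  have htotal : ∑ x ∈ hH.toFinset, uniformDensity H x = 1 := by
    rw [sum_congr rfl hconst, sum_const, ← hcard, nsmul_eq_mul, mul_inv_cancel₀ (by positivity)]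
  exact htotal ▸ hasSum_sum_of_ne_finset_zero fun x hx => if_neg (by simpa using hx)

theorem uniformDensity_mul_left {H : Subgroup G} {y : G} (hy : y ∈ H) (x : G) :
    uniformDensity H (y * x) = uniformDensity H x := by
  simp [uniformDensity, H.mul_mem_cancel_left hy]

theorem uniformDensity_mul_right {H : Subgroup G} {y : G} (hy : y ∈ H) (x : G) :
    uniformDensity H (x * y) = uniformDensity H x := by
  simp [uniformDensity, H.mul_mem_cancel_right hy]

theorem hasSum_uniformDensity_conv_of_le {H K : Subgroup G} (hHK : H ≤ K)
    (hH : (H : Set G).Finite) (x : G) :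
    HasSum (fun y => uniformDensity H y * uniformDensity K (y⁻¹ * x)) (uniformDensity K x) := by
  have key : ∀ y, uniformDensity H y * uniformDensity K (y⁻¹ * x) =
      uniformDensity H y * uniformDensity K x := by
    intro y
    by_cases hy : y ∈ H
    · rw [uniformDensity_mul_left (inv_mem (hHK hy))]
    · simp [uniformDensity, hy]
  simpa [key] using (hasSum_uniformDensity hH).mul_right (uniformDensity K x)

theorem hasSum_uniformDensity_conv_of_ge {H K : Subgroup G} (hHK : H ≤ K)
    (hH : (H : Set G).Finite) (x : G) :
    HasSum (fun y => uniformDensity K y * uniformDensity H (y⁻¹ * x)) (uniformDensity K x) := by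
  -- substitute `y = x z⁻¹`
  rw [← ((Equiv.inv G).trans (Equiv.mulLeft x)).hasSum_iff]
  have key : ∀ z, uniformDensity K (x * z⁻¹) * uniformDensity H z =
      uniformDensity H z * uniformDensity K x := by
    intro z
    rw [mul_comm]
    by_cases hz : z ∈ H
    · rw [uniformDensity_mul_right (inv_mem (hHK hz))]
    · simp [uniformDensity, hz]
  simpa [Function.comp_def, key] using (hasSum_uniformDensity hH).mul_right (uniformDensity K x)

theorem hasSum_uniformDensity_conv_max {H : ℕ → Subgroup G} (hmono : Monotone H)
    (hfin : ∀ k, (H k : Set G).Finite) (j k : ℕ) (x : G) :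
    HasSum (fun y => uniformDensity (H j) y * uniformDensity (H k) (y⁻¹ * x))
      (uniformDensity (H (max j k)) x) := by
  rcases le_total j k with h | h
  · rw [max_eq_right h]
    exact hasSum_uniformDensity_conv_of_le (hmono h) (hfin j) x
  · rw [max_eq_left h]
    exact hasSum_uniformDensity_conv_of_ge (hmono h) (hfin k) x

end UniformDensity

section MaxConvolution

/-- If `a` and `b` are the laws of independent `ℕ`-valued random variables, `maxConv a b` is the
law of their maximum: its distribution function is the product of theirs. -/
def maxConv (a b : ℕ → ℝ) (n : ℕ) : ℝ :=
  (∑ i ∈ range (n + 1), a i) * (∑ i ∈ range (n + 1), b i) -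
    (∑ i ∈ range n, a i) * (∑ i ∈ range n, b i)

theorem sum_filter_max_eq (a b : ℕ → ℝ) (n : ℕ) :
    ∑ p ∈ (range (n + 1) ×ˢ range (n + 1)).filter (fun p => max p.1 p.2 = n), a p.1 * b p.2 =
      maxConv a b n := by
  have hrest : (range (n + 1) ×ˢ range (n + 1)).filter (fun p => ¬ max p.1 p.2 = n) =
      range n ×ˢ range n := by
    ext ⟨i, j⟩
    simp only [mem_filter, mem_product, mem_range]
    omega
  rw [maxConv, sum_mul_sum, sum_mul_sum, ← sum_product', ← sum_product',
    ← sum_filter_add_sum_filter_not (range (n + 1) ×ˢ range (n + 1)) (fun p => max p.1 p.2 = n),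
    hrest, add_sub_cancel_right]

theorem HasSum.maxConv_mul {a b u : ℕ → ℝ} {L : ℝ}
    (h : HasSum (fun p : ℕ × ℕ => a p.1 * b p.2 * u (max p.1 p.2)) L) :
    HasSum (fun n => maxConv a b n * u n) L := by
  refine (h.tsum_fiberwise fun p : ℕ × ℕ => max p.1 p.2).congr_fun fun n => ?_
  have hfiber : (fun p : ℕ × ℕ => max p.1 p.2) ⁻¹' {n} =
      ↑((range (n + 1) ×ˢ range (n + 1)).filter fun p => max p.1 p.2 = n) := by
    ext ⟨i, j⟩
    simp
    omega
  rw [hfiber, Finset.tsum_subtype' _ fun p : ℕ × ℕ => a p.1 * b p.2 * u (max p.1 p.2),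
    ← sum_filter_max_eq, sum_mul]
  exact sum_congr rfl fun p hp => by rw [(mem_filter.mp hp).2]

end MaxConvolution

section Mixture

variable {G : Type*} [Group G] {H : ℕ → Subgroup G} {a b : ℕ → ℝ}

noncomputable def mixture (H : ℕ → Subgroup G) (a : ℕ → ℝ) (x : G) : ℝ :=
  ∑' k, a k * uniformDensity (H k) x

theorem hasSum_mixture_apply (ha0 : ∀ k, 0 ≤ a k) (ha : Summable a) (x : G) :
    HasSum (fun k => a k * uniformDensity (H k) x) (mixture H a x) :=
  (ha.of_nonneg_of_le (fun k => mul_nonneg (ha0 k) (uniformDensity_nonneg _ _))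
    fun k => mul_le_of_le_one_right (ha0 k) (uniformDensity_le_one _ _)).hasSum

theorem mixture_pos (hfin : ∀ k, (H k : Set G).Finite) (ha0 : ∀ k, 0 < a k) (ha : Summable a)
    {x : G} {k : ℕ} (hx : x ∈ H k) : 0 < mixture H a x :=
  (hasSum_mixture_apply (fun k => (ha0 k).le) ha x).summable.tsum_pos
    (fun k => mul_nonneg (ha0 k).le (uniformDensity_nonneg _ _)) k
    (mul_pos (ha0 k) (uniformDensity_pos (hfin k) hx))

theorem hasSum_mixture (hfin : ∀ k, (H k : Set G).Finite) (ha0 : ∀ k, 0 ≤ a k) {s : ℝ}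
    (ha : HasSum a s) : HasSum (mixture H a) s :=
  hasSum_of_hasSum_rows_of_nonneg (F := fun k x => a k * uniformDensity (H k) x)
    (fun k x => mul_nonneg (ha0 k) (uniformDensity_nonneg _ _))
    (fun k => by simpa using (hasSum_uniformDensity (hfin k)).mul_left (a k)) ha
    (hasSum_mixture_apply ha0 ha.summable)

theorem gconv_mixture (hmono : Monotone H) (hfin : ∀ k, (H k : Set G).Finite)
    (ha0 : ∀ k, 0 ≤ a k) (ha : Summable a) (hb0 : ∀ k, 0 ≤ b k) (hb : Summable b) :
    gconv (mixture H a) (mixture H b) = mixture H (maxConv a b) := by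
  funext x
  have hrow : ∀ p : ℕ × ℕ, HasSum
      (fun y => a p.1 * uniformDensity (H p.1) y * (b p.2 * uniformDensity (H p.2) (y⁻¹ * x)))
      (a p.1 * b p.2 * uniformDensity (H (max p.1 p.2)) x) := fun p =>
    ((hasSum_uniformDensity_conv_max hmono hfin p.1 p.2 x).mul_left (a p.1 * b p.2)).congr_fun
      fun y => by ring
  have hcol : ∀ y, HasSum (fun p : ℕ × ℕ =>
      a p.1 * uniformDensity (H p.1) y * (b p.2 * uniformDensity (H p.2) (y⁻¹ * x)))
      (mixture H a y * mixture H b (y⁻¹ * x)) := fun y => by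
    have ha' := hasSum_mixture_apply (H := H) ha0 ha y
    have hb' := hasSum_mixture_apply (H := H) hb0 hb (y⁻¹ * x)
    exact ha'.mul hb' (ha'.summable.mul_of_nonneg hb'.summable
      (fun k => mul_nonneg (ha0 k) (uniformDensity_nonneg _ _))
      (fun k => mul_nonneg (hb0 k) (uniformDensity_nonneg _ _)))
  have hsum : Summable fun p : ℕ × ℕ => a p.1 * b p.2 * uniformDensity (H (max p.1 p.2)) x :=
    (ha.mul_of_nonneg hb ha0 hb0).of_nonneg_of_le
      (fun p => mul_nonneg (mul_nonneg (ha0 _) (hb0 _)) (uniformDensity_nonneg _ _))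
      fun p => mul_le_of_le_one_right (mul_nonneg (ha0 _) (hb0 _)) (uniformDensity_le_one _ _)
  have htotal : HasSum (fun p : ℕ × ℕ => a p.1 * b p.2 * uniformDensity (H (max p.1 p.2)) x)
      (mixture H (maxConv a b) x) := by
    rw [mixture,
      (HasSum.maxConv_mul (u := fun n => uniformDensity (H n) x) hsum.hasSum).tsum_eq]
    exact hsum.hasSum
  have hnonneg : ∀ (p : ℕ × ℕ) y,
      0 ≤ a p.1 * uniformDensity (H p.1) y * (b p.2 * uniformDensity (H p.2) (y⁻¹ * x)) :=
    fun p y => mul_nonneg (mul_nonneg (ha0 _) (uniformDensity_nonneg _ _))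
      (mul_nonneg (hb0 _) (uniformDensity_nonneg _ _))
  exact (hasSum_of_hasSum_rows_of_nonneg hnonneg hrow htotal hcol).tsum_eq

end Mixture

section PartialSums

variable {c S : ℕ → ℝ}

theorem strictMono_of_eq_sum_range_succ (hS : ∀ k, S k = ∑ i ∈ range (k + 1), c i)
    (hc : ∀ k, 0 < c k) : StrictMono S :=
  strictMono_nat_of_lt_succ fun k => by
    rw [hS, hS, sum_range_succ _ (k + 1)]
    linarith [hc (k + 1)]

theorem tendsto_of_eq_sum_range_succ (hS : ∀ k, S k = ∑ i ∈ range (k + 1), c i)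
    (hc : Summable c) : Tendsto S atTop (𝓝 (∑' k, c k)) :=
  (hc.hasSum.tendsto_sum_nat.comp (tendsto_add_atTop_nat 1)).congr fun k => (hS k).symm

end PartialSums

section PowIncrement

variable {S : ℕ → ℝ}

/-- With `S` the partial sums of `c`, `powIncrement S t k` is the coefficient `C_k(t)`. -/
noncomputable def powIncrement (S : ℕ → ℝ) (t : ℝ) : ℕ → ℝ
  | 0 => S 0 ^ t
  | k + 1 => S (k + 1) ^ t - S k ^ t

theorem sum_range_succ_powIncrement (S : ℕ → ℝ) (t : ℝ) (k : ℕ) :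
    ∑ i ∈ range (k + 1), powIncrement S t i = S k ^ t := by
  induction k with
  | zero => simp [powIncrement]
  | succ k ih => rw [sum_range_succ, ih, powIncrement, add_sub_cancel]

theorem powIncrement_pos (hS0 : 0 < S 0) (hS : StrictMono S) {t : ℝ} (ht : 0 < t) (k : ℕ) :
    0 < powIncrement S t k := by
  cases k with
  | zero => exact Real.rpow_pos_of_pos hS0 t
  | succ k =>
    exact sub_pos.mpr
      (Real.rpow_lt_rpow (hS0.le.trans (hS.monotone k.zero_le)) (hS k.lt_succ_self) ht)

theorem hasSum_powIncrement (hS0 : 0 < S 0) (hS : StrictMono S) (hlim : Tendsto S atTop (𝓝 1))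
    {t : ℝ} (ht : 0 < t) : HasSum (powIncrement S t) 1 := by
  rw [hasSum_iff_tendsto_nat_of_nonneg fun k => (powIncrement_pos hS0 hS ht k).le,
    ← tendsto_add_atTop_iff_nat 1]
  simpa [sum_range_succ_powIncrement] using hlim.rpow_const (p := t) (Or.inl one_ne_zero)

theorem maxConv_powIncrement (hS : ∀ k, 0 < S k) (s t : ℝ) :
    maxConv (powIncrement S s) (powIncrement S t) = powIncrement S (s + t) := by
  have hprod : ∀ n, (∑ i ∈ range n, powIncrement S s i) * (∑ i ∈ range n, powIncrement S t i) =
      ∑ i ∈ range n, powIncrement S (s + t) i := by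
    rintro (_ | n)
    · simp
    · simp only [sum_range_succ_powIncrement, Real.rpow_add (hS n)]
  funext n
  rw [maxConv, hprod, hprod, sum_range_succ_sub_sum]

theorem powIncrement_one {c : ℕ → ℝ} (hS : ∀ k, S k = ∑ i ∈ range (k + 1), c i) :
    powIncrement S 1 = c := by
  funext k
  cases k with
  | zero => simp [powIncrement, hS]
  | succ k => simp [powIncrement, hS, sum_range_succ _ (k + 1)]

end PowIncrement

section ConvolutionPower

variable {G : Type*} [Group G]

theorem gconvPow_one (f : G → ℝ) : gconvPow f 1 = f := by
  funext x
  show ∑' y, f y * (if y⁻¹ * x = 1 then 1 else 0) = f x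
  rw [tsum_eq_single x fun y hy => by simp [inv_mul_eq_one, hy]]
  simp

theorem gconvPow_eq_of_gconv_add {ν : ℝ → G → ℝ}
    (hν : ∀ s > 0, ∀ t > 0, gconv (ν s) (ν t) = ν (s + t)) {τ : ℝ} (hτ : 0 < τ) {n : ℕ}
    (hn : 1 ≤ n) : gconvPow (ν τ) n = ν (n * τ) := by
  induction n, hn using Nat.le_induction with
  | base => simp [gconvPow_one]
  | succ n hn ih =>
    rw [gconvPow, ih, hν τ hτ _ (by positivity)]
    push_cast
    ring_nf

end ConvolutionPower

/-- Proposition 3.2: the measure `μ = ∑_k c_k m_k` on an infinite locally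
finite group embeds into the convolution semigroup
`μ_t = ∑_k C_k(t) m_k`, where `C_0(t) = c_0^t` and
`C_k(t) = (c_0+⋯+c_k)^t - (c_0+⋯+c_{k-1})^t`; in particular `μ` is infinitely
divisible: `μ = (μ_{1/n})^{*n}` for all `n ≥ 1`. -/
theorem stmt_5 {G : Type*} [Group G]
    (H : ℕ → Subgroup G) (hfin : ∀ k, (H k : Set G).Finite)
    (hlt : ∀ k, H k < H (k + 1)) (hunion : ∀ x : G, ∃ k, x ∈ H k)
    (c : ℕ → ℝ) (hc : ∀ k, 0 < c k) (hcsum : ∑' k : ℕ, c k = 1)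
    (m : ℕ → G → ℝ)
    (hm : ∀ (k : ℕ) (x : G),
      m k x = if x ∈ H k then ((Nat.card (H k) : ℝ))⁻¹ else 0)
    (μ : G → ℝ) (hμ : ∀ x : G, μ x = ∑' k : ℕ, c k * m k x)
    (S : ℕ → ℝ) (hS : ∀ k, S k = ∑ i ∈ Finset.range (k + 1), c i)
    (C : ℝ → ℕ → ℝ) (hC0 : ∀ t : ℝ, C t 0 = c 0 ^ t)
    (hCk : ∀ (t : ℝ) (k : ℕ), C t (k + 1) = S (k + 1) ^ t - S k ^ t)
    (μt : ℝ → G → ℝ) (hμt : ∀ (t : ℝ) (x : G), μt t x = ∑' k : ℕ, C t k * m k x) :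
    (∀ t > (0 : ℝ), (∀ k, 0 < C t k) ∧ (∀ x : G, 0 < μt t x) ∧
        ∑' x : G, μt t x = 1) ∧
    (∀ s > (0 : ℝ), ∀ t > (0 : ℝ), ∀ x : G,
        gconv (μt s) (μt t) x = μt (s + t) x) ∧
    (∀ x : G, μt 1 x = μ x) ∧
    (∀ n : ℕ, 1 ≤ n → ∀ x : G, gconvPow (μt (1 / (n : ℝ))) n x = μ x) := by
  have hmono : Monotone H := monotone_nat_of_le_succ fun k => (hlt k).le
  obtain rfl : m = fun k => uniformDensity (H k) := funext fun k => funext (hm k)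
  obtain rfl : C = powIncrement S := by
    funext t k
    cases k with
    | zero => simp [hC0, powIncrement, hS]
    | succ k => exact hCk t k
  obtain rfl : μt = fun t => mixture H (powIncrement S t) := funext fun t => funext (hμt t)
  obtain rfl : μ = mixture H c := funext hμ
  have hSpos : ∀ k, 0 < S k := fun k => hS k ▸ sum_pos (fun i _ => hc i) nonempty_range_add_one
  have hSmono : StrictMono S := strictMono_of_eq_sum_range_succ hS hc
  have hsum : Summable c := by
    by_contra h
    simp [tsum_eq_zero_of_not_summable h] at hcsum
  have hSlim : Tendsto S atTop (𝓝 1) := hcsum ▸ tendsto_of_eq_sum_range_succ hS hsum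
  have hCpos := fun t (ht : 0 < t) => powIncrement_pos (hSpos 0) hSmono ht
  have hCsum := fun t (ht : 0 < t) => hasSum_powIncrement (hSpos 0) hSmono hSlim ht
  have hsemigroup : ∀ s > 0, ∀ t > 0, gconv (mixture H (powIncrement S s))
      (mixture H (powIncrement S t)) = mixture H (powIncrement S (s + t)) := fun s hs t ht => by
    rw [gconv_mixture hmono hfin (fun k => (hCpos s hs k).le) (hCsum s hs).summable
      (fun k => (hCpos t ht k).le) (hCsum t ht).summable, maxConv_powIncrement hSpos]
  have hone : powIncrement S 1 = c := powIncrement_one hS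
  refine ⟨fun t ht => ⟨hCpos t ht, fun x => ?_, ?_⟩,
    fun s hs t ht x => by rw [hsemigroup s hs t ht], congrFun (congrArg (mixture H) hone),
    fun n hn x => ?_⟩
  · obtain ⟨k, hk⟩ := hunion x
    exact mixture_pos hfin (hCpos t ht) (hCsum t ht).summable hk
  · exact (hasSum_mixture hfin (fun k => (hCpos t ht k).le) (hCsum t ht)).tsum_eq
  · rw [gconvPow_eq_of_gconv_add hsemigroup (by positivity) hn,
      mul_one_div_cancel (by positivity), hone]
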